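/- Fix reals z1, z2 with z2 < 0 < z1, nonnegative reals g11, g22, g12, and c2⁰ > 0. If u, v : (0, ∞) → ℝ are differentiable functions with u(c2) > 0 and v(c2) > 0 for all c2 > 0, satisfying u′(c2) = F(u(c2), c2) and v′(c2) = F(v(c2), c2) for all c2 > 0, and u(c2⁰) = v(c2⁰), then u(c2) = v(c2) for all c2 > 0. -/

import Mathlib

/-!
With `k = z2 * g11 - z1 * g12 ≤ 0` and `N c2 = z1 * (1 / c2 + g22) - z2 * g12`, one has
`F c1 c2 = N c2 * (c1 / (z2 + k * c1))` for `c1 ≠ 0`. Both denominators in a difference quotient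
of `c1 ↦ c1 / (z2 + k * c1)` are at most `z2 < 0`, so this map is `|z2|⁻¹`-Lipschitz on
`[0, ∞)`. Since `N` is positive and decreasing, `F` is Lipschitz in `c1 > 0` uniformly for
`c2 ≥ a > 0`, and Gronwall uniqueness applies on every interval `(a, b)` with `0 < a`.
-/

open Set NNReal

/-- The right-hand side of the trajectory ODE `dc1/dc2 = F(c1, c2)` for stationary
solutions of the PNP-steric system. -/
noncomputable def F (z1 z2 g11 g22 g12 c1 c2 : ℝ) : ℝ :=
  (z1 * (1 / c2 + g22) - z2 * g12) / (z2 * (1 / c1 + g11) - z1 * g12)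

theorem ODE_solution_unique_of_mem_Ioi {E : Type*} [NormedAddCommGroup E] [NormedSpace ℝ E]
    {v : ℝ → E → E} {s : ℝ → Set E} {f g : ℝ → E} {c t₀ : ℝ}
    (hv : ∀ a > c, ∃ K, ∀ t > a, LipschitzOnWith K (v t) (s t))
    (ht₀ : c < t₀)
    (hf : ∀ t > c, HasDerivAt f (v t (f t)) t ∧ f t ∈ s t)
    (hg : ∀ t > c, HasDerivAt g (v t (g t)) t ∧ g t ∈ s t)
    (heq : f t₀ = g t₀) :
    EqOn f g (Ioi c) := by
  intro t (ht : c < t)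
  have hc : c < (c + min t t₀) / 2 := by linarith [lt_min ht ht₀]
  obtain ⟨K, hK⟩ := hv _ hc
  have hsub : Ioo ((c + min t t₀) / 2) (max t t₀ + 1) ⊆ Ioi c := fun r hr => hc.trans hr.1
  have ht₀_mem : t₀ ∈ Ioo ((c + min t t₀) / 2) (max t t₀ + 1) :=
    ⟨by linarith [min_le_right t t₀], by linarith [le_max_right t t₀]⟩
  have ht_mem : t ∈ Ioo ((c + min t t₀) / 2) (max t t₀ + 1) :=
    ⟨by linarith [min_le_left t t₀], by linarith [le_max_left t t₀]⟩
  exact ODE_solution_unique_of_mem_Ioo (fun r hr => hK r hr.1) ht₀_mem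
    (fun r hr => hf r (hsub hr)) (fun r hr => hg r (hsub hr)) heq ht_mem

lemma lipschitzOnWith_div_affine {p k : ℝ} (hp : p < 0) (hk : k ≤ 0) :
    LipschitzOnWith ‖p‖₊⁻¹ (fun x => x / (p + k * x)) (Ici 0) := by
  refine LipschitzOnWith.of_dist_le_mul fun x (hx : 0 ≤ x) y (hy : 0 ≤ y) => ?_
  have hDx : p + k * x ≤ p := by nlinarith
  have hDy : p + k * y ≤ p := by nlinarith
  have hDxy : 0 < (p + k * x) * (p + k * y) := mul_pos_of_neg_of_neg (by linarith) (by linarith)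
  have hsub : x / (p + k * x) - y / (p + k * y) = p * (x - y) / ((p + k * x) * (p + k * y)) := by
    rw [div_sub_div _ _ (by linarith) (by linarith)]
    ring
  have hprod : p * p ≤ (p + k * x) * (p + k * y) := by nlinarith
  calc dist (x / (p + k * x)) (y / (p + k * y))
      = |p| * |x - y| / ((p + k * x) * (p + k * y)) := by
        rw [Real.dist_eq, hsub, abs_div, abs_mul, abs_of_pos hDxy]
    _ ≤ |p| * |x - y| / (p * p) := by gcongr; exact mul_self_pos.2 hp.ne
    _ = ↑‖p‖₊⁻¹ * dist x y := by
        rw [NNReal.coe_inv, coe_nnnorm, Real.norm_eq_abs, Real.dist_eq, ← abs_mul_abs_self p]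
        field_simp

lemma F_eq_mul_div {z1 z2 g11 g22 g12 c1 c2 : ℝ} (hc1 : c1 ≠ 0) :
    F z1 z2 g11 g22 g12 c1 c2 =
      (z1 * (1 / c2 + g22) - z2 * g12) * (c1 / (z2 + (z2 * g11 - z1 * g12) * c1)) := by
  rw [F, show z2 * (1 / c1 + g11) - z1 * g12 = (z2 + (z2 * g11 - z1 * g12) * c1) / c1 by
    field_simp; ring, div_div_eq_mul_div, mul_div_assoc]

lemma lipschitzOnWith_F {z1 z2 g11 g22 g12 c2 : ℝ} (hz2 : z2 < 0) (hz1 : 0 ≤ z1)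
    (hg11 : 0 ≤ g11) (hg12 : 0 ≤ g12) :
    LipschitzOnWith (‖z1 * (1 / c2 + g22) - z2 * g12‖₊ * ‖z2‖₊⁻¹)
      (fun c1 => F z1 z2 g11 g22 g12 c1 c2) (Ioi 0) := by
  have hk : z2 * g11 - z1 * g12 ≤ 0 := by nlinarith
  have h := (lipschitzWith_smul (z1 * (1 / c2 + g22) - z2 * g12)).comp_lipschitzOnWith
    ((lipschitzOnWith_div_affine hz2 hk).mono Ioi_subset_Ici_self)
  intro x hx y hy
  simpa only [Function.comp_apply, smul_eq_mul, F_eq_mul_div (ne_of_gt hx),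
    F_eq_mul_div (ne_of_gt hy)] using h hx hy

lemma lipschitzOnWith_F_of_le {z1 z2 g11 g22 g12 a c2 : ℝ} (hz2 : z2 < 0) (hz1 : 0 ≤ z1)
    (hg11 : 0 ≤ g11) (hg22 : 0 ≤ g22) (hg12 : 0 ≤ g12) (ha : 0 < a) (hc2 : a ≤ c2) :
    LipschitzOnWith (‖z1 * (1 / a + g22) - z2 * g12‖₊ * ‖z2‖₊⁻¹)
      (fun c1 => F z1 z2 g11 g22 g12 c1 c2) (Ioi 0) := by
  refine (lipschitzOnWith_F hz2 hz1 hg11 hg12).weaken ?_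
  have h1 : 1 / c2 ≤ 1 / a := one_div_le_one_div_of_le ha hc2
  have h0 : 0 ≤ z1 * (1 / c2 + g22) - z2 * g12 := by
    have : 0 ≤ 1 / c2 := one_div_nonneg.2 (ha.le.trans hc2)
    nlinarith
  gcongr
  rw [← NNReal.coe_le_coe, coe_nnnorm, coe_nnnorm, Real.norm_of_nonneg h0,
    Real.norm_of_nonneg (h0.trans (by nlinarith))]
  nlinarith

/-- Uniqueness part of Lemma 2(1) of the paper: the solution trajectory passing through a
given point of the positive quadrant is unique. -/
theorem stmt3 (z1 z2 g11 g22 g12 c20 : ℝ)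
    (hz2 : z2 < 0) (hz1 : 0 < z1)
    (hg11 : 0 ≤ g11) (hg22 : 0 ≤ g22) (hg12 : 0 ≤ g12)
    (hc20 : 0 < c20)
    (u v : ℝ → ℝ)
    (hu_pos : ∀ c2 : ℝ, 0 < c2 → 0 < u c2)
    (hv_pos : ∀ c2 : ℝ, 0 < c2 → 0 < v c2)
    (hu_ode : ∀ c2 : ℝ, 0 < c2 → HasDerivAt u (F z1 z2 g11 g22 g12 (u c2) c2) c2)
    (hv_ode : ∀ c2 : ℝ, 0 < c2 → HasDerivAt v (F z1 z2 g11 g22 g12 (v c2) c2) c2)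
    (h0 : u c20 = v c20) :
    ∀ c2 : ℝ, 0 < c2 → u c2 = v c2 :=
  ODE_solution_unique_of_mem_Ioi (v := fun c2 c1 => F z1 z2 g11 g22 g12 c1 c2)
    (s := fun _ => Ioi 0)
    (fun _ ha => ⟨_, fun _ hc2 => lipschitzOnWith_F_of_le hz2 hz1.le hg11 hg22 hg12 ha hc2.le⟩)
    hc20 (fun c2 hc2 => ⟨hu_ode c2 hc2, hu_pos c2 hc2⟩)
    (fun c2 hc2 => ⟨hv_ode c2 hc2, hv_pos c2 hc2⟩) h0
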